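/- For B a chi-squared random variable with d degrees of freedom and any s > 0, the probability that B ≥ d + 2*sqrt(d)*s + 2*s^2 is at most exp(-s^2). -/

import Mathlib

open MeasureTheory ProbabilityTheory Real

/-!
Chernoff: for `0 < t < 1/2`, `P(B ≥ ε) ≤ exp (-t ε) E[exp (t B)] = exp (-t ε) (1 - 2t)^(-d/2)`.
With `u = 1 - 2t`, the inequality `log x ≤ sinh (log x)` at `x = u⁻¹` gives
`-log u / 2 ≤ (u⁻¹ - u) / 4`, and for `t = s / (√d + 2s)` the resulting exponent
`-t ε + d (u⁻¹ - u) / 4` equals `-s²` exactly.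
-/

lemma gaussianPDFReal_zero_one_mul_exp_mul_sq (t x : ℝ) :
    gaussianPDFReal 0 1 x * exp (t * x ^ 2) = (√(2 * π))⁻¹ * exp (-(1 / 2 - t) * x ^ 2) := by
  rw [gaussianPDFReal, mul_assoc, ← exp_add]
  congr 2 <;> simp only [NNReal.coe_one, mul_one, sub_zero]
  ring

lemma integral_exp_mul_sq_gaussianReal {t : ℝ} (ht : t < 1 / 2) :
    ∫ x, exp (t * x ^ 2) ∂gaussianReal 0 1 = (√(1 - 2 * t))⁻¹ := by
  have h2π : (0 : ℝ) < √(2 * π) := by positivity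
  have hu : 0 < 1 - 2 * t := by linarith
  simp_rw [integral_gaussianReal_eq_integral_smul one_ne_zero, smul_eq_mul,
    gaussianPDFReal_zero_one_mul_exp_mul_sq, integral_const_mul, integral_gaussian]
  rw [show π / (1 / 2 - t) = 2 * π / (1 - 2 * t) by field_simp, sqrt_div' _ hu.le]
  field_simp

lemma integrable_exp_mul_sq_gaussianReal {t : ℝ} (ht : t < 1 / 2) :
    Integrable (fun x ↦ exp (t * x ^ 2)) (gaussianReal 0 1) :=
  .of_integral_ne_zero <| by
    rw [integral_exp_mul_sq_gaussianReal ht]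
    have : 0 < 1 - 2 * t := by linarith
    positivity

lemma log_le_sub_inv_div_two {x : ℝ} (hx : 1 ≤ x) : log x ≤ (x - x⁻¹) / 2 := by
  have h := self_le_sinh_iff.mpr (log_nonneg hx)
  rwa [sinh_eq, exp_neg, exp_log (by linarith)] at h

lemma inv_sqrt_le_exp {u : ℝ} (hu0 : 0 < u) (hu1 : u ≤ 1) :
    (√u)⁻¹ ≤ exp ((u⁻¹ - u) / 4) := by
  have h := log_le_sub_inv_div_two ((one_le_inv₀ hu0).mpr hu1)
  rw [inv_inv, log_inv] at h
  rw [← exp_log (inv_pos.mpr (sqrt_pos.mpr hu0)), exp_le_exp, log_inv, log_sqrt hu0.le]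
  linarith

section ChiSquared

variable {ι : Type*} [Fintype ι] {t : ℝ}

lemma exp_mul_sum_sq (t : ℝ) (z : ι → ℝ) : exp (t * ∑ j, z j ^ 2) = ∏ j, exp (t * z j ^ 2) := by
  rw [Finset.mul_sum, exp_sum]

lemma integrable_exp_mul_sum_sq_pi_gaussianReal (ht : t < 1 / 2) :
    Integrable (fun z : ι → ℝ ↦ exp (t * ∑ j, z j ^ 2)) (Measure.pi fun _ ↦ gaussianReal 0 1) := by
  simp_rw [exp_mul_sum_sq]
  exact .fintype_prod fun _ ↦ integrable_exp_mul_sq_gaussianReal ht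

lemma mgf_sum_sq_pi_gaussianReal (ht : t < 1 / 2) :
    mgf (fun z : ι → ℝ ↦ ∑ j, z j ^ 2) (Measure.pi fun _ ↦ gaussianReal 0 1) t
      = (√(1 - 2 * t))⁻¹ ^ Fintype.card ι := by
  rw [mgf]
  simp_rw [exp_mul_sum_sq]
  rw [integral_fintype_prod_eq_pow fun x ↦ exp (t * x ^ 2), integral_exp_mul_sq_gaussianReal ht]

lemma measureReal_sum_sq_ge_le_exp (ε : ℝ) (ht0 : 0 < t) (ht : t < 1 / 2) :
    (Measure.pi fun _ : ι ↦ gaussianReal 0 1).real {z | ε ≤ ∑ j, z j ^ 2}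
      ≤ exp (-t * ε + Fintype.card ι * ((1 - 2 * t)⁻¹ - (1 - 2 * t)) / 4) := by
  have hu : 0 < 1 - 2 * t := by linarith
  calc _ ≤ exp (-t * ε) * (√(1 - 2 * t))⁻¹ ^ Fintype.card ι := by
        rw [← mgf_sum_sq_pi_gaussianReal ht]
        exact measure_ge_le_exp_mul_mgf ε ht0.le (integrable_exp_mul_sum_sq_pi_gaussianReal ht)
    _ ≤ exp (-t * ε) * exp (((1 - 2 * t)⁻¹ - (1 - 2 * t)) / 4) ^ Fintype.card ι := by
        gcongr
        exact inv_sqrt_le_exp hu (by linarith)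
    _ = _ := by rw [← exp_nat_mul, ← exp_add]; ring_nf

end ChiSquared

lemma laurentMassart_exponent_eq {r s : ℝ} (hr : 0 < r) (hs : 0 ≤ s) :
    -(s / (r + 2 * s)) * (r ^ 2 + 2 * r * s + 2 * s ^ 2)
      + r ^ 2 * ((1 - 2 * (s / (r + 2 * s)))⁻¹ - (1 - 2 * (s / (r + 2 * s)))) / 4 = -s ^ 2 := by
  have : r + 2 * s ≠ 0 := by positivity
  have : 1 - 2 * (s / (r + 2 * s)) = r / (r + 2 * s) := by field_simp; ring
  rw [this, inv_div]
  field_simp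
  ring

/-- Laurent–Massart tail bound: for `B` a chi-squared random variable with `d` degrees of
freedom (the sum of `d` squared independent standard normals) and any `s > 0`, the
probability that `B ≥ d + 2√d·s + 2s²` is at most `exp(-s²)`. -/
theorem laurent_massart_upper_tail (d : ℕ) (s : ℝ) (hs : 0 < s) :
    (Measure.pi fun _ : Fin d => gaussianReal 0 1)
      {z | (d : ℝ) + 2 * Real.sqrt d * s + 2 * s ^ 2 ≤ ∑ j, (z j) ^ 2}
      ≤ ENNReal.ofReal (Real.exp (-s ^ 2)) := by
  rcases Nat.eq_zero_or_pos d with rfl | hd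
  · have : ¬ 2 * s ^ 2 ≤ 0 := not_le.mpr (by positivity)
    simp [this]
  set r := √(d : ℝ)
  have hr : 0 < r := sqrt_pos.mpr (Nat.cast_pos.mpr hd)
  have hrd : (d : ℝ) = r ^ 2 := (sq_sqrt (Nat.cast_nonneg d)).symm
  have ht0 : 0 < s / (r + 2 * s) := by positivity
  have ht : s / (r + 2 * s) < 1 / 2 := by rw [div_lt_iff₀ (by positivity)]; linarith
  rw [ENNReal.le_ofReal_iff_toReal_le (measure_ne_top _ _) (exp_pos _).le]
  have hexp : -(s / (r + 2 * s)) * (d + 2 * r * s + 2 * s ^ 2)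
      + d * ((1 - 2 * (s / (r + 2 * s)))⁻¹ - (1 - 2 * (s / (r + 2 * s)))) / 4 = -s ^ 2 := by
    rw [hrd]; exact laurentMassart_exponent_eq hr hs.le
  have h := measureReal_sum_sq_ge_le_exp (ι := Fin d) ((d : ℝ) + 2 * r * s + 2 * s ^ 2) ht0 ht
  rwa [Fintype.card_fin, hexp] at h
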